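/- Let p be a prime, t ≥ 1, and let C ⊆ (ℤ_{p^t})^n be a nonzero linear code of rank K with minimum Hamming distance d. If d_L(C) > p^{t−1}·μ_p·(n−K), then C is MDR, i.e. d = n−K+1. -/

import Mathlib

/-! Two bounds on the minimum Hamming distance `d` meet. The rank Singleton bound
`K + d ≤ n + 1` holds because deleting `d - 1` coordinates is injective on `C`, and a submodule
of `(ℤ_q)^m` needs at most `m` generators (pull it back to a subgroup of `ℤ^m`). Conversely, some
codeword of weight at most `d` is killed by `p`, hence is `p^(t-1)` times a vector over `ℤ_p`; its
`p - 1` nonzero multiples are codewords whose Lee weights add up to `p^(t-1) (p - 1) μ_p` per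
nonzero coordinate, so `d_L ≤ p^(t-1) μ_p d`. The hypothesis then forces `d > n - K`. -/

/-- Lee weight of an element of `ZMod q`. -/
noncomputable def leeWt {q : ℕ} (a : ZMod q) : ℕ := min (ZMod.val a) (q - ZMod.val a)

/-- Lee weight of a vector over `ZMod q`. -/
noncomputable def leeWtVec {q n : ℕ} (x : Fin n → ZMod q) : ℕ := ∑ i, leeWt (x i)

/-- Minimum Lee distance (= minimum Lee weight of a nonzero codeword) of a linear code. -/
noncomputable def minLee {q n : ℕ} (C : Submodule (ZMod q) (Fin n → ZMod q)) : ℕ :=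
  sInf {w | ∃ x ∈ C, x ≠ 0 ∧ leeWtVec x = w}

/-- Minimum Hamming distance (= minimum Hamming weight of a nonzero codeword). -/
noncomputable def minHam {q n : ℕ} (C : Submodule (ZMod q) (Fin n → ZMod q)) : ℕ :=
  sInf {w | ∃ x ∈ C, x ≠ 0 ∧ hammingNorm x = w}

/-- Average nonzero Lee weight of `ZMod q`. -/
noncomputable def mu (q : ℕ) : ℚ :=
  if Even q then (q : ℚ)^2 / (4 * ((q : ℚ) - 1)) else ((q : ℚ) + 1) / 4

/-- `Phi n k p`: the maximum minimum Lee distance over `k`-dimensional linear codes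
of length `n` over `ZMod p`. -/
noncomputable def Phi (n k p : ℕ) : ℕ :=
  sSup {d | ∃ C : Submodule (ZMod p) (Fin n → ZMod p),
    Module.finrank (ZMod p) ↥C = k ∧ minLee C = d}

/-- Rank of a linear code over `ZMod q`: minimal number of generators. -/
noncomputable def codeRank {q n : ℕ} (C : Submodule (ZMod q) (Fin n → ZMod q)) : ℕ :=
  sInf {m | ∃ s : Finset (Fin n → ZMod q), s.card = m ∧
    Submodule.span (ZMod q) (↑s : Set (Fin n → ZMod q)) = C}

/-- `PhiR n K q`: the maximum minimum Lee distance over rank-`K` linear codes of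
length `n` over `ZMod q`. -/
noncomputable def PhiR (n K q : ℕ) : ℕ :=
  sSup {d | ∃ C : Submodule (ZMod q) (Fin n → ZMod q), codeRank C = K ∧ minLee C = d}

open Finset

section LeeWeight

lemma leeWt_zero {q : ℕ} : leeWt (0 : ZMod q) = 0 := by
  simp [leeWt]

lemma sum_range_min_sub (q : ℕ) : ∑ r ∈ range q, min r (q - r) = q / 2 * ((q + 1) / 2) := by
  induction q using Nat.twoStepInduction with
  | zero => rfl
  | one => rfl
  | more q ih _ =>
    have hshift : ∀ r ∈ range q, min (r + 1) (q + 2 - (r + 1)) = min r (q - r) + 1 := by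
      intro r hr
      rw [mem_range] at hr
      omega
    rw [sum_range_succ', sum_range_succ, sum_congr rfl hshift, sum_add_distrib, ih]
    have h1 : (q + 2) / 2 = q / 2 + 1 := by omega
    have h2 : (q + 2 + 1) / 2 = (q + 1) / 2 + 1 := by omega
    have h3 : q / 2 + (q + 1) / 2 = q := by omega
    have h4 : min (q + 1) (q + 2 - (q + 1)) = 1 := by omega
    simp only [sum_const, card_range, smul_eq_mul, mul_one, h1, h2, h4, Nat.zero_min, add_zero]
    nlinarith [h3]

lemma sum_leeWt (q : ℕ) [NeZero q] : ∑ a : ZMod q, leeWt a = q / 2 * ((q + 1) / 2) := by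
  obtain ⟨m, rfl⟩ := Nat.exists_eq_succ_of_ne_zero (NeZero.ne q)
  exact (Fin.sum_univ_eq_sum_range (fun r => min r (m + 1 - r)) (m + 1)).trans
    (sum_range_min_sub _)

lemma sub_one_mul_mu (q : ℕ) : ((q : ℚ) - 1) * mu q = ((q / 2 * ((q + 1) / 2) : ℕ) : ℚ) := by
  obtain ⟨k, rfl | rfl⟩ := Nat.even_or_odd' q
  · have hk : 2 * (k : ℚ) - 1 ≠ 0 := by
      intro h
      have : ((2 * k : ℕ) : ℚ) = 1 := by push_cast; linarith
      norm_cast at this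
      omega
    rw [mu, if_pos (even_two_mul k), show 2 * k / 2 = k by omega,
      show (2 * k + 1) / 2 = k by omega]
    push_cast
    field_simp
    ring
  · rw [mu, if_neg (Nat.not_even_two_mul_add_one k), show (2 * k + 1) / 2 = k by omega,
      show (2 * k + 1 + 1) / 2 = k + 1 by omega]
    push_cast
    ring

lemma mu_pos {q : ℕ} (hq : q ≠ 0) : 0 < mu q := by
  rw [mu]
  split_ifs with h
  · obtain ⟨m, rfl⟩ := h
    have : (2 : ℚ) ≤ m + m := by exact_mod_cast (show 2 ≤ m + m by omega)
    push_cast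
    apply div_pos <;> nlinarith
  · positivity

lemma sum_leeWt_mul_right {p : ℕ} [Fact p.Prime] {m : ZMod p} (hm : m ≠ 0) :
    ∑ a : ZMod p, leeWt (a * m) = ∑ a : ZMod p, leeWt a :=
  Fintype.sum_bijective (· * m) (mulRight_bijective₀ m hm) _ _ fun _ => rfl

lemma sum_leeWtVec_smul {p n : ℕ} [Fact p.Prime] (r : Fin n → ZMod p) :
    ∑ c : ZMod p, leeWtVec (c • r) = hammingNorm r * ∑ a : ZMod p, leeWt a := by
  have hcoord : ∀ i, ∑ c : ZMod p, leeWt (c * r i) =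
      if r i ≠ 0 then ∑ a : ZMod p, leeWt a else 0 := by
    intro i
    split_ifs with h
    · exact sum_leeWt_mul_right h
    · simp [not_not.mp h, leeWt_zero]
  simp only [leeWtVec, Pi.smul_apply, smul_eq_mul]
  rw [sum_comm, sum_congr rfl fun i _ => hcoord i, sum_ite, sum_const_zero, add_zero, sum_const,
    smul_eq_mul, hammingNorm]

end LeeWeight

/-- `liftMul a r` is `a * r` for `r : ZMod b`, read in `ZMod q`. For `q = a * b` this is the
additive isomorphism of `ZMod b` onto the `b`-torsion `a • ZMod q`. -/
def liftMul (a : ℕ) {b q : ℕ} (r : ZMod b) : ZMod q := ((a * r.val : ℕ) : ZMod q)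

section LiftMul

variable {a b q : ℕ}

lemma val_liftMul [NeZero b] (hq : q = a * b) (r : ZMod b) :
    (liftMul a r : ZMod q).val = a * r.val := by
  subst hq
  rw [liftMul, ZMod.val_natCast, Nat.mul_mod_mul_left, Nat.mod_eq_of_lt r.val_lt]

lemma leeWt_liftMul [NeZero b] (hq : q = a * b) (r : ZMod b) :
    leeWt (liftMul a r : ZMod q) = a * leeWt r := by
  rw [leeWt, val_liftMul hq, hq, ← Nat.mul_sub, min_mul_mul_left, leeWt]

lemma liftMul_eq_zero_iff [NeZero a] [NeZero b] (hq : q = a * b) {r : ZMod b} :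
    (liftMul a r : ZMod q) = 0 ↔ r = 0 := by
  rw [← ZMod.val_eq_zero, val_liftMul hq, mul_eq_zero, ZMod.val_eq_zero]
  simp [NeZero.ne a]

lemma natCast_val_mul_liftMul (hq : q = a * b) (c r : ZMod b) :
    (c.val : ZMod q) * liftMul a r = liftMul a (c * r) := by
  subst hq
  rw [liftMul, liftMul, ZMod.val_mul, ← Nat.cast_mul, ZMod.natCast_eq_natCast_iff' _ _ (a * b),
    mul_left_comm, Nat.mul_mod_mul_left, Nat.mul_mod_mul_left, Nat.mod_mod]

lemma exists_liftMul_eq_of_mul_eq_zero [NeZero q] (hq : q = a * b) {x : ZMod q}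
    (hx : (b : ZMod q) * x = 0) : ∃ r : ZMod b, liftMul a r = x := by
  have hb : b ≠ 0 := by
    rintro rfl
    exact NeZero.ne q (by simpa using hq)
  have hdvd : b * a ∣ b * x.val := by
    rw [mul_comm b a, ← hq, ← ZMod.natCast_eq_zero_iff]
    push_cast [ZMod.natCast_zmod_val]
    exact hx
  obtain ⟨m, hm⟩ := (mul_dvd_mul_iff_left hb).mp hdvd
  have hmb : m < b := Nat.lt_of_mul_lt_mul_left (a := a) (by rw [← hm, ← hq]; exact x.val_lt)
  refine ⟨m, ?_⟩
  rw [liftMul, ZMod.val_natCast_of_lt hmb, ← hm, ZMod.natCast_zmod_val]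

variable {n : ℕ}

lemma leeWtVec_liftMul [NeZero b] (hq : q = a * b) (r : Fin n → ZMod b) :
    leeWtVec (fun i => (liftMul a (r i) : ZMod q)) = a * leeWtVec r := by
  simp only [leeWtVec, leeWt_liftMul hq, mul_sum]

lemma hammingNorm_liftMul [NeZero a] [NeZero b] (hq : q = a * b) (r : Fin n → ZMod b) :
    hammingNorm (fun i => (liftMul a (r i) : ZMod q)) = hammingNorm r := by
  simp only [hammingNorm, ne_eq, liftMul_eq_zero_iff hq]

end LiftMul

lemma exists_pow_smul_ne_zero_and_smul_eq_zero {R M : Type*} [Monoid R] [Zero M] [MulAction R M]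
    (π : R) {c : M} (hc : c ≠ 0) {N : ℕ} (hN : π ^ N • c = 0) :
    ∃ j, π ^ j • c ≠ 0 ∧ π • π ^ j • c = 0 := by
  induction N with
  | zero => exact absurd (by simpa using hN) hc
  | succ N ih =>
    by_cases h : π ^ N • c = 0
    · exact ih h
    · exact ⟨N, h, by rwa [smul_smul, ← pow_succ']⟩

section Codes

variable {q n : ℕ} {C : Submodule (ZMod q) (Fin n → ZMod q)}

lemma minHam_le {x : Fin n → ZMod q} (hx : x ∈ C) (hx0 : x ≠ 0) : minHam C ≤ hammingNorm x :=
  Nat.sInf_le ⟨x, hx, hx0, rfl⟩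

lemma minLee_le {x : Fin n → ZMod q} (hx : x ∈ C) (hx0 : x ≠ 0) : minLee C ≤ leeWtVec x :=
  Nat.sInf_le ⟨x, hx, hx0, rfl⟩

lemma exists_mem_ne_zero_hammingNorm_eq_minHam (hC : C ≠ ⊥) :
    ∃ c ∈ C, c ≠ 0 ∧ hammingNorm c = minHam C := by
  obtain ⟨c, hcC, hc0⟩ := (Submodule.ne_bot_iff C).mp hC
  exact Nat.sInf_mem (s := {w | ∃ x ∈ C, x ≠ 0 ∧ hammingNorm x = w}) ⟨_, c, hcC, hc0, rfl⟩

lemma exists_mem_ne_zero_smul_eq_zero_hammingNorm_le (hC : C ≠ ⊥) {π : ZMod q}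
    (hπ : IsNilpotent π) : ∃ z ∈ C, z ≠ 0 ∧ π • z = 0 ∧ hammingNorm z ≤ minHam C := by
  obtain ⟨c, hcC, hc0, hcw⟩ := exists_mem_ne_zero_hammingNorm_eq_minHam hC
  obtain ⟨N, hN⟩ := hπ
  obtain ⟨j, hj0, hj⟩ := exists_pow_smul_ne_zero_and_smul_eq_zero π hc0 (N := N) (by simp [hN])
  exact ⟨π ^ j • c, C.smul_mem _ hcC, hj0, hj, hcw ▸ hammingNorm_smul_le_hammingNorm⟩

lemma codeRank_eq_spanFinrank (C : Submodule (ZMod q) (Fin n → ZMod q)) :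
    codeRank C = C.spanFinrank := by
  rw [Submodule.spanFinrank_eq_iInf, codeRank, iInf]
  congr 1
  ext m
  simp only [Set.mem_ofPred_eq, Set.mem_range, Subtype.exists, exists_prop, and_comm]

lemma spanFinrank_le_card {ι : Type*} [Fintype ι] (N : Submodule (ZMod q) (ι → ZMod q)) :
    N.spanFinrank ≤ Fintype.card ι := by
  let f : (ι → ℤ) →ₗ[ℤ] ι → ZMod q := (Algebra.linearMap ℤ (ZMod q)).compLeft ι
  have hsurj : Function.Surjective (algebraMap ℤ (ZMod q)) := ZMod.intCast_surjective
  let N' := (N.restrictScalars ℤ).comap f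
  have hN' : N'.map f = N.restrictScalars ℤ :=
    Submodule.map_comap_eq_of_surjective hsurj.comp_left _
  calc N.spanFinrank = (N.restrictScalars ℤ).spanFinrank := by
        rw [Submodule.spanFinrank, Submodule.spanFinrank,
          Submodule.spanRank_restrictScalars_eq hsurj]
    _ ≤ N'.spanFinrank := hN' ▸ Submodule.spanFinrank_map_le_of_fg f (IsNoetherian.noetherian N')
    _ = Module.finrank ℤ N' := by
        rw [Module.finrank_eq_spanFinrank_of_free, Submodule.spanFinrank_top]
    _ ≤ Module.finrank ℤ (ι → ℤ) := Submodule.finrank_le N'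
    _ = Fintype.card ι := Module.finrank_pi ℤ

theorem codeRank_add_minHam_le (hC : C ≠ ⊥) : codeRank C + minHam C ≤ n + 1 := by
  classical
  obtain ⟨c, hcC, hc0, hcw⟩ := exists_mem_ne_zero_hammingNorm_eq_minHam hC
  have hd1 : 1 ≤ minHam C := hcw ▸ hammingNorm_pos_iff.mpr hc0
  have hdn : minHam C ≤ n := hcw ▸ hammingNorm_le_card_fintype.trans_eq (Fintype.card_fin n)
  obtain ⟨T, -, hT⟩ := exists_subset_card_eq (s := (univ : Finset (Fin n))) (n := minHam C - 1)
    (by simp only [card_univ, Fintype.card_fin]; omega)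
  -- a codeword vanishing off `T` has weight `< minHam C`: restriction to `Tᶜ` is injective on `C`
  let π := LinearMap.funLeft (ZMod q) (ZMod q) (Subtype.val : ↥(Tᶜ) → Fin n)
  have hinj : Function.Injective (π ∘ₗ C.subtype) := by
    refine (injective_iff_map_eq_zero _).mpr fun ⟨x, hx⟩ hπx => ?_
    by_contra hx0
    have hsupp : hammingNorm x ≤ T.card := card_le_card fun i hi => by
      by_contra hiT
      exact (mem_filter.mp hi).2 (congrFun hπx ⟨i, mem_compl.mpr hiT⟩)
    have := minHam_le hx (by simpa using hx0)
    omega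
  calc codeRank C + minHam C
      = ((⊤ : Submodule (ZMod q) C).map (π ∘ₗ C.subtype)).spanFinrank + minHam C := by
        rw [Submodule.spanFinrank_map_eq_of_injective _ hinj, Submodule.spanFinrank_top,
          codeRank_eq_spanFinrank]
    _ ≤ Fintype.card ↥(Tᶜ) + minHam C := by grw [spanFinrank_le_card]
    _ = n + 1 := by
        rw [Fintype.card_coe, card_compl, Fintype.card_fin, hT]
        omega

end Codes

section LeeBound

variable {p k n : ℕ} [Fact p.Prime]
  {C : Submodule (ZMod (p ^ (k + 1))) (Fin n → ZMod (p ^ (k + 1)))}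

theorem sub_one_mul_minLee_le (hC : C ≠ ⊥) :
    (p - 1) * minLee C ≤ p ^ k * (minHam C * ∑ a : ZMod p, leeWt a) := by
  have hq : p ^ (k + 1) = p ^ k * p := pow_succ p k
  have hpnil : IsNilpotent (p : ZMod (p ^ (k + 1))) :=
    ⟨k + 1, by rw [← Nat.cast_pow, ZMod.natCast_self]⟩
  obtain ⟨z, hzC, hz0, hpz, hzw⟩ := exists_mem_ne_zero_smul_eq_zero_hammingNorm_le hC hpnil
  choose r hr using fun i => exists_liftMul_eq_of_mul_eq_zero hq (by simpa using congrFun hpz i)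
  have hz : z = fun i => liftMul (p ^ k) (r i) := funext fun i => (hr i).symm
  have hr0 : r ≠ 0 := by
    rintro rfl
    exact hz0 (by rw [hz]; ext i; exact (liftMul_eq_zero_iff hq).mpr rfl)
  have hsmul : ∀ c : ZMod p,
      (c.val : ZMod (p ^ (k + 1))) • z = fun i => liftMul (p ^ k) ((c • r) i) := by
    intro c
    ext i
    rw [hz, Pi.smul_apply, smul_eq_mul, natCast_val_mul_liftMul hq, Pi.smul_apply, smul_eq_mul]
  have hmem : ∀ c : ZMod p, c ≠ 0 → minLee C ≤ p ^ k * leeWtVec (c • r) := by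
    intro c hc
    have hne : (c.val : ZMod (p ^ (k + 1))) • z ≠ 0 := by
      rw [← hammingNorm_pos_iff, hsmul, hammingNorm_liftMul hq, hammingNorm_pos_iff]
      exact smul_ne_zero hc hr0
    simpa only [hsmul, leeWtVec_liftMul hq] using minLee_le (C.smul_mem _ hzC) hne
  calc (p - 1) * minLee C = ∑ _c ∈ univ.erase (0 : ZMod p), minLee C := by
        rw [sum_const, card_erase_of_mem (mem_univ _), card_univ, ZMod.card, smul_eq_mul]
    _ ≤ ∑ c ∈ univ.erase (0 : ZMod p), p ^ k * leeWtVec (c • r) :=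
        sum_le_sum fun c hc => hmem c (ne_of_mem_erase hc)
    _ ≤ ∑ c : ZMod p, p ^ k * leeWtVec (c • r) := sum_le_sum_of_subset (subset_univ _)
    _ = p ^ k * (hammingNorm r * ∑ a : ZMod p, leeWt a) := by rw [← mul_sum, sum_leeWtVec_smul]
    _ ≤ p ^ k * (minHam C * ∑ a : ZMod p, leeWt a) := by
        rw [← hammingNorm_liftMul (a := p ^ k) hq, ← hz]
        gcongr

theorem minLee_le_mu_mul_minHam (hC : C ≠ ⊥) :
    (minLee C : ℚ) ≤ p ^ k * mu p * minHam C := by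
  have hp : 1 < p := (Fact.out : p.Prime).one_lt
  have hS : ((∑ a : ZMod p, leeWt a : ℕ) : ℚ) = ((p : ℚ) - 1) * mu p := by
    rw [sum_leeWt, sub_one_mul_mu]
  have h := (Nat.cast_le (α := ℚ)).mpr (sub_one_mul_minLee_le hC)
  push_cast [Nat.cast_sub hp.le, hS] at h
  have h' : ((p : ℚ) - 1) * minLee C ≤ ((p : ℚ) - 1) * (p ^ k * mu p * minHam C) := by
    linarith
  exact le_of_mul_le_mul_left h' (by rw [sub_pos]; exact_mod_cast hp)

end LeeBound

theorem lee_gt_implies_MDR (p t n K d : ℕ) (hp : p.Prime) (ht : 1 ≤ t)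
    (C : Submodule (ZMod (p ^ t)) (Fin n → ZMod (p ^ t))) (hC : C ≠ ⊥)
    (hK : codeRank C = K)
    (hd : minHam C = d)
    (hL : (p : ℚ) ^ (t - 1) * mu p * ((n : ℚ) - (K : ℚ)) < (minLee C : ℚ)) :
    (d : ℤ) = (n : ℤ) - (K : ℤ) + 1 := by
  obtain ⟨k, rfl⟩ : ∃ k, t = k + 1 := ⟨t - 1, by omega⟩
  have : Fact p.Prime := ⟨hp⟩
  have hSingleton := codeRank_add_minHam_le hC
  have hLee := minLee_le_mu_mul_minHam hC
  have hpos : (0 : ℚ) < p ^ k * mu p :=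
    mul_pos (pow_pos (by exact_mod_cast hp.pos) k) (mu_pos hp.ne_zero)
  rw [Nat.add_sub_cancel] at hL
  subst hK hd
  have hlt : (n : ℚ) - codeRank C < minHam C := lt_of_mul_lt_mul_left (hL.trans_le hLee) hpos.le
  have : (n : ℤ) - codeRank C < minHam C := by exact_mod_cast hlt
  omega
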